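/- arXiv:1707.04443 — 6 statements merged into one kernel-verified Lean document; each statement's English description precedes it below -/
import Mathlib

section
/- For the test equation u' = (λ₀+⋯+λ_s)u, the type-A stabilizing correction method based on any pair satisfying conditions (order2aa) and (order2a) yields u_{n+1} = r_A·u_n with r_A = 1 + 2z/ϖ - z/ϖ² + z²/(2ϖ²), where z = z₀+z₁+⋯+z_s, ϖ = ∏_{j=1}^s (1-θz_j), and z_j = Δt·λ_j; in particular r_A is independent of κ. -/
open Finset

lemma aux_rec (θ : ℂ) (z : ℕ → ℂ) (c : ℂ) (x : ℕ → ℂ) :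
    ∀ s : ℕ, (∀ j, 1 ≤ j → j ≤ s → (x j - c) * (1 - θ * z j) = x (j-1) - c) →
    (x s - c) * ∏ j ∈ Finset.Icc 1 s, (1 - θ * z j) = x 0 - c := by
  intro s
  induction s with
  | zero => intro _; simp
  | succ n ih =>
    intro h
    rw [Finset.prod_Icc_succ_top (Nat.le_add_left 1 n)]
    have h1 := h (n+1) (Nat.le_add_left 1 n) le_rfl
    simp only [Nat.add_sub_cancel] at h1
    calc (x (n+1) - c) * ((∏ j ∈ Finset.Icc 1 n, (1 - θ * z j)) * (1 - θ * z (n+1)))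
        = ((x (n+1) - c) * (1 - θ * z (n+1))) * ∏ j ∈ Finset.Icc 1 n, (1 - θ * z j) := by ring
      _ = (x n - c) * ∏ j ∈ Finset.Icc 1 n, (1 - θ * z j) := by rw [h1]
      _ = x 0 - c := ih (fun j hj1 hjn => h j hj1 (hjn.trans (Nat.le_succ n)))

/-- the type-A stabilizing correction method applied to the
linear test equation yields amplification factor
r_A = 1 + 2z/ϖ - z/ϖ² + z²/(2ϖ²), independent of κ. -/
theorem stmt_5 (s : ℕ) (hs : 1 ≤ s) (θ κ a21 ahat21 b1 b2 bhat1 bhat2 : ℝ)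
    (hκ0 : κ ≠ 0)
    (hmatch1 : κ = ahat21) (hmatch2 : ahat21 = a21 + θ)
    (ho1 : b1 + b2 + θ = 1) (ho2 : b2 * κ + θ = 1/2)
    (ho3 : bhat1 + bhat2 = 1) (ho4 : bhat2 * κ = 1/2)
    (z : ℕ → ℂ)
    (hnz : ∀ j, 1 ≤ j → j ≤ s → 1 - (θ : ℂ) * z j ≠ 0)
    (un : ℂ) (v w : ℕ → ℂ)
    (hv0 : v 0 = un + (κ : ℂ) * (∑ j ∈ Finset.range (s+1), z j) * un)
    (hv : ∀ j, 1 ≤ j → j ≤ s →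
      v j = v (j-1) + (θ : ℂ) * z j * (v j - un))
    (hw0 : w 0 = un + (bhat1 : ℂ) * (∑ j ∈ Finset.range (s+1), z j) * un
      + (bhat2 : ℂ) * (∑ j ∈ Finset.range (s+1), z j) * v s)
    (hw : ∀ j, 1 ≤ j → j ≤ s →
      w j = w (j-1) + (θ : ℂ) * z j *
        (w j - (1 - 1/(κ : ℂ)) * un - (1/(κ : ℂ)) * v s)) :
    w s = (1 + 2 * (∑ j ∈ Finset.range (s+1), z j)
            / (∏ j ∈ Finset.Icc 1 s, (1 - (θ : ℂ) * z j))
        - (∑ j ∈ Finset.range (s+1), z j)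
            / (∏ j ∈ Finset.Icc 1 s, (1 - (θ : ℂ) * z j))^2
        + (∑ j ∈ Finset.range (s+1), z j)^2
            / (2 * (∏ j ∈ Finset.Icc 1 s, (1 - (θ : ℂ) * z j))^2)) * un := by
  set Z : ℂ := ∑ j ∈ Finset.range (s+1), z j with hZ
  set P : ℂ := ∏ j ∈ Finset.Icc 1 s, (1 - (θ : ℂ) * z j) with hP
  have hPne : P ≠ 0 := Finset.prod_ne_zero_iff.mpr
    (fun j hj => hnz j (Finset.mem_Icc.mp hj).1 (Finset.mem_Icc.mp hj).2)
  have hκC : (κ : ℂ) ≠ 0 := by exact_mod_cast hκ0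
  -- v recursion
  have hVs : v s * P = un * P + (κ : ℂ) * Z * un := by
    have h := aux_rec (θ : ℂ) z un v s (fun j hj1 hjs => by
      have := hv j hj1 hjs; linear_combination this)
    rw [hv0] at h; linear_combination h
  -- w recursion
  set c : ℂ := (1 - 1/(κ : ℂ)) * un + (1/(κ : ℂ)) * v s with hc
  have hWs : (w s - c) * P = w 0 - c :=
    aux_rec (θ : ℂ) z c w s (fun j hj1 hjs => by
      have := hw j hj1 hjs; rw [hc]; linear_combination this)
  have hinv : (κ : ℂ) * (1/(κ : ℂ)) = 1 := by field_simp
  have hW2 : (w s * κ - ((κ : ℂ)-1)*un - v s) * P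
      = w 0 * κ - ((κ : ℂ)-1)*un - v s := by
    rw [hc] at hWs
    linear_combination (κ : ℂ) * hWs + (P - 1) * (v s - un) * hinv
  rw [hw0] at hW2
  -- cast order conditions
  have hb3 : (bhat1 : ℂ) + bhat2 = 1 := by exact_mod_cast ho3
  have hb4 : (bhat2 : ℂ) * κ = 1/2 := by
    have h := congrArg (fun x : ℝ => (x : ℂ)) ho4
    push_cast at h; exact h
  have key : w s * ((κ : ℂ) * P^2 * 2)
      = un * κ * (2*P^2 + 4*P*Z - 2*Z + Z^2) := by
    linear_combination (2*P) * hW2 + (2*P + Z - 2) * hVs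
      + (2*P*Z*un*(κ : ℂ)) * hb3 + (2*P*Z*(v s) - 2*P*Z*un) * hb4
  have hden : (κ : ℂ) * P^2 * 2 ≠ 0 := by
    simp [hκC, hPne]
  have hws : w s = un * κ * (2*P^2 + 4*P*Z - 2*Z + Z^2) / ((κ : ℂ) * P^2 * 2) := by
    rw [eq_div_iff hden]; exact key
  rw [hws]
  field_simp
  ring
end

section
/- For the type-B stabilizing correction method applied to the test equation, the stability function is r_B = 1 + z + (1/2+ν)z²/ϖ - ν z²/ϖ² + (1/2 - θ + ν)θ z³/ϖ², where ν = θκμ₂, provided the order-two conditions (order2bb),(order2b) hold; moreover if additionally b̂₂ = â₃₂ and the conditions (order2a) hold, then ν = θ and r_B = 1 + z + (1/2+θ)z²/ϖ - θ z²/ϖ² + (θ/2) z³/ϖ². -/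
/-!
Each internal stage is a chain of linearly implicit steps towards a fixed value `c`,
`f j - c = (f (j-1) - c) / (1 - θ z_j)`, so after `s` steps the initial deviation from `c` is
divided by `ϖ`. This gives `v_s` and `w_s` in closed form. Substituted into the finishing stage,
the conditions `b₁ + b₂ + θ = 1` and `â₃₁ + â₃₂ = 1` cancel the `z/ϖ` terms, and the implicit
relation `κ â₃₂ = 1/2 - θ + ν` turns the remaining coefficients into those of `r_B`. When moreover
`â₃₂ κ = 1/2`, the same relation forces `ν = θ`.
-/

open Finset

theorem sub_mul_prod_eq_of_implicit_steps {R : Type*} [CommRing R] {a f : ℕ → R} {c : R}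
    {s : ℕ} (h : ∀ j, 1 ≤ j → j ≤ s → f j = f (j - 1) + a j * (f j - c)) :
    (f s - c) * ∏ j ∈ Icc 1 s, (1 - a j) = f 0 - c := by
  induction s with
  | zero => simp
  | succ n ih =>
    have hstep := h (n + 1) (by omega) le_rfl
    rw [Nat.add_sub_cancel] at hstep
    calc (f (n + 1) - c) * ∏ j ∈ Icc 1 (n + 1), (1 - a j)
        = ((f (n + 1) - c) * (1 - a (n + 1))) * ∏ j ∈ Icc 1 n, (1 - a j) := by
          rw [prod_Icc_succ_top (by omega)]; ring
      _ = (f n - c) * ∏ j ∈ Icc 1 n, (1 - a j) := by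
          congr 1; linear_combination hstep
      _ = f 0 - c := ih fun j h1 h2 => h j h1 (by omega)

theorem eq_add_div_prod_of_implicit_steps {K : Type*} [Field K] {a f : ℕ → K} {c : K}
    {s : ℕ} (h : ∀ j, 1 ≤ j → j ≤ s → f j = f (j - 1) + a j * (f j - c))
    (ha : ∀ j, 1 ≤ j → j ≤ s → 1 - a j ≠ 0) :
    f s = c + (f 0 - c) / ∏ j ∈ Icc 1 s, (1 - a j) := by
  have hprod : ∏ j ∈ Icc 1 s, (1 - a j) ≠ 0 :=
    prod_ne_zero_iff.mpr fun j hj => ha j (mem_Icc.mp hj).1 (mem_Icc.mp hj).2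
  rw [← sub_mul_prod_eq_of_implicit_steps h, mul_div_cancel_right₀ _ hprod, add_sub_cancel]

def stabilityFunctionB {K : Type*} [Field K] (θ ν Z ϖ : K) : K :=
  1 + Z + (1/2 + ν) * Z^2 / ϖ - ν * Z^2 / ϖ^2 + (1/2 - θ + ν) * θ * Z^3 / ϖ^2

theorem typeB_step_eq_stabilityFunctionB {K : Type*} [Field K]
    {θ κ c31 c32 b1 b2 μ1 μ2 Z ϖ u v w : K}
    (hθμ1 : θ * μ1 = c31 - b1) (hθμ2 : θ * μ2 = c32 - b2)
    (hb : b1 + b2 + θ = 1) (hc : c31 + c32 = 1) (hrel : κ * c32 = 1/2 - θ + θ * κ * μ2)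
    (hv : v = u + κ * Z * u / ϖ)
    (hw : w = μ1 * u + μ2 * v + (u + c31 * Z * u + c32 * Z * v - (μ1 * u + μ2 * v)) / ϖ) :
    u + b1 * Z * u + b2 * Z * v + θ * Z * w = stabilityFunctionB θ (θ * κ * μ2) Z ϖ * u := by
  subst hw hv
  unfold stabilityFunctionB
  linear_combination (Z^2 / ϖ + θ * Z^3 / ϖ^2) * u * hrel
    + (Z * u + θ * Z^2 * u / ϖ - Z * u / ϖ) * hc + Z * u / ϖ * hb
    + (Z * u - Z * u / ϖ) * hθμ1 + (Z * (u + κ * Z * u / ϖ) - Z * u / ϖ) * hθμ2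

theorem stmt_7_general (s : ℕ) (θ κ ahat31 ahat32 b1 b2 μ1 μ2 : ℝ)
    (hθ0 : θ > 0)
    (ho1 : b1 + b2 + θ = 1)
    (ho3 : ahat31 + ahat32 = 1)
    (hμ1 : μ1 = (ahat31 - b1)/θ) (hμ2 : μ2 = (ahat32 - b2)/θ)
    (hrel : κ * ahat32 = 1/2 - θ + θ * κ * μ2)
    (z : ℕ → ℂ)
    (hnz : ∀ j, 1 ≤ j → j ≤ s → 1 - (θ : ℂ) * z j ≠ 0)
    (un unp1 : ℂ) (v w : ℕ → ℂ)
    (hv0 : v 0 = un + (κ : ℂ) * (∑ j ∈ Finset.range (s+1), z j) * un)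
    (hv : ∀ j, 1 ≤ j → j ≤ s →
      v j = v (j-1) + (θ : ℂ) * z j * (v j - un))
    (hw0 : w 0 = un + (ahat31 : ℂ) * (∑ j ∈ Finset.range (s+1), z j) * un
      + (ahat32 : ℂ) * (∑ j ∈ Finset.range (s+1), z j) * v s)
    (hw : ∀ j, 1 ≤ j → j ≤ s →
      w j = w (j-1) + (θ : ℂ) * z j *
        (w j - (μ1 : ℂ) * un - (μ2 : ℂ) * v s))
    (hfin : unp1 = un + (b1 : ℂ) * (∑ j ∈ Finset.range (s+1), z j) * un
      + (b2 : ℂ) * (∑ j ∈ Finset.range (s+1), z j) * v s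
      + (θ : ℂ) * (∑ j ∈ Finset.range (s+1), z j) * w s) :
    (unp1 = (1 + (∑ j ∈ Finset.range (s+1), z j)
        + ((1/2 + θ*κ*μ2 : ℝ) : ℂ) * (∑ j ∈ Finset.range (s+1), z j)^2
            / (∏ j ∈ Finset.Icc 1 s, (1 - (θ : ℂ) * z j))
        - ((θ*κ*μ2 : ℝ) : ℂ) * (∑ j ∈ Finset.range (s+1), z j)^2
            / (∏ j ∈ Finset.Icc 1 s, (1 - (θ : ℂ) * z j))^2
        + ((1/2 - θ + θ*κ*μ2 : ℝ) : ℂ) * (θ : ℂ)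
            * (∑ j ∈ Finset.range (s+1), z j)^3
            / (∏ j ∈ Finset.Icc 1 s, (1 - (θ : ℂ) * z j))^2) * un) ∧
    (∀ bhat1 bhat2 : ℝ, ahat31 = bhat1 → ahat32 = bhat2 →
      bhat1 + bhat2 = 1 → bhat2 * κ = 1/2 →
      θ * κ * μ2 = θ ∧
      unp1 = (1 + (∑ j ∈ Finset.range (s+1), z j)
        + ((1/2 + θ : ℝ) : ℂ) * (∑ j ∈ Finset.range (s+1), z j)^2
            / (∏ j ∈ Finset.Icc 1 s, (1 - (θ : ℂ) * z j))
        - (θ : ℂ) * (∑ j ∈ Finset.range (s+1), z j)^2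
            / (∏ j ∈ Finset.Icc 1 s, (1 - (θ : ℂ) * z j))^2
        + ((θ/2 : ℝ) : ℂ) * (∑ j ∈ Finset.range (s+1), z j)^3
            / (∏ j ∈ Finset.Icc 1 s, (1 - (θ : ℂ) * z j))^2) * un) := by
  have hθ : θ ≠ 0 := hθ0.ne'
  have hθμ1 : θ * μ1 = ahat31 - b1 := by rw [hμ1, mul_div_cancel₀ _ hθ]
  have hθμ2 : θ * μ2 = ahat32 - b2 := by rw [hμ2, mul_div_cancel₀ _ hθ]
  have hvs := eq_add_div_prod_of_implicit_steps hv hnz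
  rw [hv0, add_sub_cancel_left] at hvs
  have hws := eq_add_div_prod_of_implicit_steps (f := w) (c := μ1 * un + μ2 * v s)
    (fun j h1 h2 => by linear_combination hw j h1 h2) hnz
  rw [hw0] at hws
  have hstep := typeB_step_eq_stabilityFunctionB
    (by exact_mod_cast hθμ1 : (θ : ℂ) * μ1 = ahat31 - b1)
    (by exact_mod_cast hθμ2 : (θ : ℂ) * μ2 = ahat32 - b2)
    (by exact_mod_cast ho1 : (b1 : ℂ) + b2 + θ = 1)
    (by exact_mod_cast ho3 : (ahat31 : ℂ) + ahat32 = 1)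
    (by rw [← Complex.ofReal_inj] at hrel; push_cast at hrel; exact hrel :
      (κ : ℂ) * ahat32 = 1/2 - θ + θ * κ * μ2) hvs hws
  have hrB : unp1 = stabilityFunctionB (θ : ℂ) (θ * κ * μ2) _ _ * un := hfin.trans hstep
  refine ⟨by rw [hrB, stabilityFunctionB]; push_cast; ring, fun bhat1 bhat2 _ h32 _ hκ32 => ?_⟩
  have hν : θ * κ * μ2 = θ := by linear_combination κ * h32 + hκ32 - hrel
  have hνC : (θ : ℂ) * κ * μ2 = θ := by exact_mod_cast hν
  refine ⟨hν, ?_⟩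
  rw [hrB, stabilityFunctionB, hνC]
  push_cast
  ring

/-- stability function of the type-B stabilizing correction
method, and its simplification when b̂₂ = â₃₂ with the order-two
conditions (order2a). -/
theorem stmt_7 (s : ℕ) (hs : 1 ≤ s) (θ κ a21 ahat21 ahat31 ahat32 b1 b2 μ1 μ2 : ℝ)
    (hθ0 : θ > 0) (hκ0 : κ ≠ 0)
    (hmatch1 : κ = ahat21) (hmatch2 : ahat21 = a21 + θ)
    (ho1 : b1 + b2 + θ = 1) (ho2 : b2 * κ + θ = 1/2)
    (ho3 : ahat31 + ahat32 = 1)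
    (hμ1 : μ1 = (ahat31 - b1)/θ) (hμ2 : μ2 = (ahat32 - b2)/θ)
    (hrel : κ * ahat32 = 1/2 - θ + θ * κ * μ2)
    (z : ℕ → ℂ)
    (hnz : ∀ j, 1 ≤ j → j ≤ s → 1 - (θ : ℂ) * z j ≠ 0)
    (un unp1 : ℂ) (v w : ℕ → ℂ)
    (hv0 : v 0 = un + (κ : ℂ) * (∑ j ∈ Finset.range (s+1), z j) * un)
    (hv : ∀ j, 1 ≤ j → j ≤ s →
      v j = v (j-1) + (θ : ℂ) * z j * (v j - un))
    (hw0 : w 0 = un + (ahat31 : ℂ) * (∑ j ∈ Finset.range (s+1), z j) * un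
      + (ahat32 : ℂ) * (∑ j ∈ Finset.range (s+1), z j) * v s)
    (hw : ∀ j, 1 ≤ j → j ≤ s →
      w j = w (j-1) + (θ : ℂ) * z j *
        (w j - (μ1 : ℂ) * un - (μ2 : ℂ) * v s))
    (hfin : unp1 = un + (b1 : ℂ) * (∑ j ∈ Finset.range (s+1), z j) * un
      + (b2 : ℂ) * (∑ j ∈ Finset.range (s+1), z j) * v s
      + (θ : ℂ) * (∑ j ∈ Finset.range (s+1), z j) * w s) :
    (unp1 = (1 + (∑ j ∈ Finset.range (s+1), z j)
        + ((1/2 + θ*κ*μ2 : ℝ) : ℂ) * (∑ j ∈ Finset.range (s+1), z j)^2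
            / (∏ j ∈ Finset.Icc 1 s, (1 - (θ : ℂ) * z j))
        - ((θ*κ*μ2 : ℝ) : ℂ) * (∑ j ∈ Finset.range (s+1), z j)^2
            / (∏ j ∈ Finset.Icc 1 s, (1 - (θ : ℂ) * z j))^2
        + ((1/2 - θ + θ*κ*μ2 : ℝ) : ℂ) * (θ : ℂ)
            * (∑ j ∈ Finset.range (s+1), z j)^3
            / (∏ j ∈ Finset.Icc 1 s, (1 - (θ : ℂ) * z j))^2) * un) ∧
    (∀ bhat1 bhat2 : ℝ, ahat31 = bhat1 → ahat32 = bhat2 →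
      bhat1 + bhat2 = 1 → bhat2 * κ = 1/2 →
      θ * κ * μ2 = θ ∧
      unp1 = (1 + (∑ j ∈ Finset.range (s+1), z j)
        + ((1/2 + θ : ℝ) : ℂ) * (∑ j ∈ Finset.range (s+1), z j)^2
            / (∏ j ∈ Finset.Icc 1 s, (1 - (θ : ℂ) * z j))
        - (θ : ℂ) * (∑ j ∈ Finset.range (s+1), z j)^2
            / (∏ j ∈ Finset.Icc 1 s, (1 - (θ : ℂ) * z j))^2
        + ((θ/2 : ℝ) : ℂ) * (∑ j ∈ Finset.range (s+1), z j)^3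
            / (∏ j ∈ Finset.Icc 1 s, (1 - (θ : ℂ) * z j))^2) * un) :=
  stmt_7_general s θ κ ahat31 ahat32 b1 b2 μ1 μ2 hθ0 ho1 ho3 hμ1 hμ2 hrel z hnz un unp1 v w hv0 hv
    hw0 hw hfin
end

section
/- Define φ_A(π) = 1 - (2/θ)π + (1/(2θ²))π² for θ > 0. Then |φ_A(π)| ≤ 1 for all π ∈ [0,1] if and only if θ ≥ 1/4. -/
/-!
Completing the square, `φ_A(π) = (2θ - π)² / (2θ²) - 1`, so `φ_A ≥ -1` always and `φ_A(π) ≤ 1`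
exactly when `|2θ - π| ≤ 2θ`, i.e. (for `π ≥ 0`) when `π ≤ 4θ`. Requiring this on all of `[0, 1]`
amounts to `1 ≤ 4θ`.
-/

namespace StabilityTypeA

noncomputable def phiA (θ π : ℝ) : ℝ := 1 - (2 / θ) * π + (1 / (2 * θ ^ 2)) * π ^ 2

theorem phiA_eq_sq_sub_one {θ : ℝ} (hθ : θ ≠ 0) (π : ℝ) :
    phiA θ π = (2 * θ - π) ^ 2 / (2 * θ ^ 2) - 1 := by
  unfold phiA
  field_simp
  ring

theorem abs_phiA_le_one_iff {θ π : ℝ} (hθ : 0 < θ) (hπ : 0 ≤ π) :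
    |phiA θ π| ≤ 1 ↔ π ≤ 4 * θ := by
  have hden : 0 < 2 * θ ^ 2 := by positivity
  have hsq : 0 ≤ (2 * θ - π) ^ 2 / (2 * θ ^ 2) := by positivity
  rw [abs_le, phiA_eq_sq_sub_one hθ.ne', div_sub_one hden.ne', div_le_iff₀ hden,
    le_div_iff₀ hden]
  constructor
  · rintro ⟨-, h⟩
    nlinarith
  · intro h
    constructor <;> nlinarith

end StabilityTypeA

/-- |φ_A(π)| ≤ 1 on [0,1] iff θ ≥ 1/4. -/
theorem stmt_9 (θ : ℝ) (hθ : θ > 0) :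
    (∀ π : ℝ, 0 ≤ π → π ≤ 1 →
      |1 - (2/θ) * π + (1/(2*θ^2)) * π^2| ≤ 1) ↔ θ ≥ 1/4 := by
  change (∀ π : ℝ, 0 ≤ π → π ≤ 1 → |StabilityTypeA.phiA θ π| ≤ 1) ↔ _
  constructor
  · intro h
    have := (StabilityTypeA.abs_phiA_le_one_iff hθ zero_le_one).1 (h 1 zero_le_one le_rfl)
    linarith
  · intro h π hπ₀ hπ₁
    exact (StabilityTypeA.abs_phiA_le_one_iff hθ hπ₀).2 (by linarith)
end

section
/- Let s ≥ 2 and θ > 0. Then there exists π ∈ (0,1) such that 1 - (1/θ)(1/2+ν)π + (1/θ)(1/2-θ+ν)π² ≠ 0, for any real ν; consequently the type-B stability function r_B(z₀,…,z_s) is unbounded as z_s → -∞ for some choice of nonpositive real z₁,…,z_{s-1}, and the necessary stability condition lim_{z_s→-∞}|r_B| ≤ 1 fails. -/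
/-!
The leading coefficient factors as `(1 - π) (θ - (1/2 - θ + ν) π) / θ`; its second factor is affine
in `π` and equals `θ ≠ 0` at `π = 0`, so it is nonzero at `π = 1/2` or at `π = 1/3`. Putting the
whole product `∏_{j<s} (1 - θ z_j) = π⁻¹` on `z₁ = (1 - π⁻¹)/θ ≤ 0`, substituting `u = 1/z_s` shows
that `r_B / z_s` tends to this nonzero coefficient, so `|r_B|` grows linearly as `z_s → -∞`.
-/

open Finset Filter

open Topology

noncomputable def asymptoticCoeff (θ ν π : ℝ) : ℝ :=
  1 - (1/θ) * (1/2 + ν) * π + (1/θ) * (1/2 - θ + ν) * π^2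

-- `r_B` where `z₀ + ⋯ + z_{s-1} = w` and `∏_{j<s} (1 - θ z_j) = P`, as a function of `t = z_s`.
noncomputable def stabilityB (θ ν w P t : ℝ) : ℝ :=
  1 + (w + t) + (1/2 + ν) * (w + t)^2 / (P * (1 - θ * t))
    - ν * (w + t)^2 / (P * (1 - θ * t))^2
    + (1/2 - θ + ν) * θ * (w + t)^3 / (P * (1 - θ * t))^2

lemma asymptoticCoeff_eq {θ : ℝ} (hθ : θ ≠ 0) (ν π : ℝ) :
    asymptoticCoeff θ ν π = (1 - π) * (θ - (1/2 - θ + ν) * π) / θ := by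
  unfold asymptoticCoeff
  field_simp
  ring

lemma exists_asymptoticCoeff_ne_zero {θ : ℝ} (hθ : θ ≠ 0) (ν : ℝ) :
    ∃ π, 0 < π ∧ π < 1 ∧ asymptoticCoeff θ ν π ≠ 0 := by
  have hfactor : ∃ π, 0 < π ∧ π < 1 ∧ θ - (1/2 - θ + ν) * π ≠ 0 := by
    by_cases hhalf : θ - (1/2 - θ + ν) * (1/2) = 0
    · exact ⟨1/3, by norm_num, by norm_num, fun hthird => hθ (by linarith)⟩
    · exact ⟨1/2, by norm_num, by norm_num, hhalf⟩
  obtain ⟨π, hπ0, hπ1, hne⟩ := hfactor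
  refine ⟨π, hπ0, hπ1, ?_⟩
  rw [asymptoticCoeff_eq hθ]
  exact div_ne_zero (mul_ne_zero (sub_ne_zero.mpr hπ1.ne') hne) hθ

lemma tendsto_stabilityB_div {θ P : ℝ} (hθ : θ ≠ 0) (hP : P ≠ 0) (ν w : ℝ) :
    Tendsto (fun t => stabilityB θ ν w P t / t) atBot (𝓝 (asymptoticCoeff θ ν P⁻¹)) := by
  set a := 1/2 + ν
  set b := 1/2 - θ + ν
  let G : ℝ → ℝ := fun u => (1 + w) * u + 1 + a * (w * u + 1)^2 / (P * (u - θ))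
      - ν * u * (w * u + 1)^2 / (P * (u - θ))^2 + b * θ * (w * u + 1)^3 / (P * (u - θ))^2
  have hG0 : G 0 = asymptoticCoeff θ ν P⁻¹ := by
    simp only [G, asymptoticCoeff]
    field_simp
    ring
  have hden : P * ((0:ℝ) - θ) ≠ 0 := by simpa using ⟨hP, hθ⟩
  have hGcont : ContinuousAt G 0 := by
    simp only [G]
    fun_prop (disch := first | exact hden | exact pow_ne_zero 2 hden)
  have heq : (fun t => G t⁻¹) =ᶠ[atBot] (fun t => stabilityB θ ν w P t / t) := by
    filter_upwards [eventually_ne_atBot 0, eventually_ne_atBot θ⁻¹] with t ht ht_ne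
    have hθt : 1 - θ * t ≠ 0 := by
      contrapose! ht_ne
      field_simp
      linarith
    have hshift : t⁻¹ - θ = t⁻¹ * (1 - θ * t) := by field_simp
    simp only [G, stabilityB, hshift]
    field_simp
    ring
  rw [← hG0]
  exact (hGcont.tendsto.comp tendsto_inv_atBot_zero).congr' heq

lemma tendsto_abs_atTop_of_tendsto_div_atBot {f : ℝ → ℝ} {c : ℝ} (hc : c ≠ 0)
    (hf : Tendsto (fun t => f t / t) atBot (𝓝 c)) :
    Tendsto (fun t => |f t|) atBot atTop := by
  have hprod : Tendsto (fun t => |t| * |f t / t|) atBot atTop :=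
    tendsto_abs_atBot_atTop.atTop_mul_pos (abs_pos.mpr hc) hf.abs
  refine hprod.congr' ?_
  filter_upwards [eventually_ne_atBot 0] with t ht
  rw [abs_div, mul_div_cancel₀ _ (abs_ne_zero.mpr ht)]

/-- for s ≥ 2 the leading coefficient in the asymptotic
expansion of the type-B stability function cannot vanish for all
π ∈ (0,1); consequently r_B is unbounded as z_s → -∞ for some choice of
nonpositive real z₁,…,z_{s-1}, and the necessary stability condition fails. -/
theorem stmt_12 (s : ℕ) (hs : 2 ≤ s) (θ ν : ℝ) (hθ : θ > 0) :
    (∃ π : ℝ, 0 < π ∧ π < 1 ∧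
      1 - (1/θ) * (1/2 + ν) * π + (1/θ) * (1/2 - θ + ν) * π^2 ≠ 0) ∧
    (∃ z : ℕ → ℝ, (∀ j, 1 ≤ j → j ≤ s - 1 → z j ≤ 0) ∧ ∃ z0 : ℂ,
      Tendsto (fun t : ℝ =>
        ‖(1 + ((z0 + ∑ j ∈ Finset.Icc 1 (s-1), (z j : ℂ)) + (t : ℂ))
          + ((1/2 + ν : ℝ) : ℂ)
              * ((z0 + ∑ j ∈ Finset.Icc 1 (s-1), (z j : ℂ)) + (t : ℂ))^2
              / ((∏ j ∈ Finset.Icc 1 (s-1), (1 - (θ : ℂ) * (z j : ℂ)))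
                  * (1 - (θ : ℂ) * (t : ℂ)))
          - (ν : ℂ) * ((z0 + ∑ j ∈ Finset.Icc 1 (s-1), (z j : ℂ)) + (t : ℂ))^2
              / ((∏ j ∈ Finset.Icc 1 (s-1), (1 - (θ : ℂ) * (z j : ℂ)))
                  * (1 - (θ : ℂ) * (t : ℂ)))^2
          + ((1/2 - θ + ν : ℝ) : ℂ) * (θ : ℂ)
              * ((z0 + ∑ j ∈ Finset.Icc 1 (s-1), (z j : ℂ)) + (t : ℂ))^3
              / ((∏ j ∈ Finset.Icc 1 (s-1), (1 - (θ : ℂ) * (z j : ℂ)))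
                  * (1 - (θ : ℂ) * (t : ℂ)))^2)‖)
        atBot atTop) := by
  obtain ⟨π, hπ0, hπ1, hc⟩ := exists_asymptoticCoeff_ne_zero hθ.ne' ν
  refine ⟨⟨π, hπ0, hπ1, hc⟩, ?_⟩
  set w := (1 - π⁻¹) / θ
  have hw : 1 - θ * w = π⁻¹ := by rw [mul_div_cancel₀ _ hθ.ne']; ring
  let z : ℕ → ℝ := fun j => if j = 1 then w else 0
  have hw_nonpos : w ≤ 0 :=
    div_nonpos_of_nonpos_of_nonneg (sub_nonpos.mpr ((one_le_inv₀ hπ0).mpr hπ1.le)) hθ.le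
  have hz : ∀ j, 1 ≤ j → j ≤ s - 1 → z j ≤ 0 := fun j _ _ => by
    simp only [z]
    split_ifs
    exacts [hw_nonpos, le_rfl]
  have h1 : 1 ∈ Icc 1 (s - 1) := mem_Icc.mpr ⟨le_rfl, by omega⟩
  have hsum : ∑ j ∈ Icc 1 (s - 1), (z j : ℂ) = w :=
    (sum_eq_single_of_mem 1 h1 fun j _ hj => by simp [z, hj]).trans (by simp [z])
  have hprod : ∏ j ∈ Icc 1 (s - 1), (1 - (θ : ℂ) * z j) = (π⁻¹ : ℝ) :=
    (prod_eq_single_of_mem 1 h1 fun j _ hj => by simp [z, hj]).trans (by simp [z, ← hw])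
  refine ⟨z, hz, 0, ?_⟩
  refine (tendsto_abs_atTop_of_tendsto_div_atBot (by rwa [inv_inv])
    (tendsto_stabilityB_div hθ.ne' (inv_ne_zero hπ0.ne') ν w)).congr fun t => ?_
  rw [hsum, hprod, zero_add, ← Real.norm_eq_abs, ← Complex.norm_real, stabilityB]
  push_cast
  rfl
end

section
/- Let s = 1 and θ > 0, ν real. Then lim_{z₁→-∞} r_B(z₀,z₁) = φ_B(z₀) := (1/θ²)(1/2 - 2θ + θ²) + (1/θ)(1/2 - 2θ + ν)z₀, where the limit is along real z₁ → -∞ and z₀ is a fixed complex number. -/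
open Filter Bornology Topology

/-!
Put `q = (z₀ + z₁) / (1 - θ z₁)`. Since `1 + θ q = (1 + θ z₀) / (1 - θ z₁)`, the singular part of
`r_B` is divisible by `1 + θ q`, and `r_B` becomes the polynomial
`1 - ν q² + (1 + θ z₀) q (1 + (1/2 - θ + ν) q)` in `q`. As `z₁ → ∞` in any direction, `q → -1/θ`.
-/

section Field

variable {K : Type*} [Field K]

def typeBStability (θ ν z₀ z₁ : K) : K :=
  1 + (z₀ + z₁) + (1/2 + ν) * (z₀ + z₁) ^ 2 / (1 - θ * z₁)
    - ν * (z₀ + z₁) ^ 2 / (1 - θ * z₁) ^ 2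
    + (1/2 - θ + ν) * θ * (z₀ + z₁) ^ 3 / (1 - θ * z₁) ^ 2

theorem typeBStability_eq {θ ν z₀ z₁ q : K} (h : 1 - θ * z₁ ≠ 0)
    (hq : z₀ + z₁ = q * (1 - θ * z₁)) :
    typeBStability θ ν z₀ z₁ = 1 - ν * q ^ 2 + (1 + θ * z₀) * q * (1 + (1/2 - θ + ν) * q) := by
  obtain rfl : z₀ = q * (1 - θ * z₁) - z₁ := by linear_combination hq
  simp only [typeBStability, sub_add_cancel]
  field_simp
  ring

end Field

theorem tendsto_div_one_sub_mul_cobounded {𝕜 : Type*} [NormedField 𝕜] {θ : 𝕜} (hθ : θ ≠ 0)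
    (z₀ : 𝕜) : Tendsto (fun z => (z₀ + z) / (1 - θ * z)) (cobounded 𝕜) (𝓝 (-θ⁻¹)) := by
  have hden : Tendsto (fun z => 1 - θ * z) (cobounded 𝕜) (cobounded 𝕜) :=
    (tendsto_const_sub_cobounded 1).comp (tendsto_mul_left_cobounded hθ)
  have hlim : Tendsto (fun z => -θ⁻¹ + (z₀ + θ⁻¹) * (1 - θ * z)⁻¹) (cobounded 𝕜)
      (𝓝 (-θ⁻¹ + (z₀ + θ⁻¹) * 0)) :=
    tendsto_const_nhds.add (tendsto_const_nhds.mul (tendsto_inv₀_cobounded.comp hden))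
  rw [mul_zero, add_zero] at hlim
  refine hlim.congr' ?_
  filter_upwards [hden.eventually_ne_cobounded 0] with z hz
  field_simp
  ring

/-- with s = 1, the type-B stability function tends to
φ_B(z₀) as z₁ → -∞ along the reals. -/
theorem stmt_13 (θ ν : ℝ) (hθ : θ > 0) (z0 : ℂ) :
    Tendsto (fun z1 : ℝ =>
        1 + (z0 + (z1 : ℂ))
          + ((1/2 + ν : ℝ) : ℂ) * (z0 + (z1 : ℂ))^2 / (1 - (θ : ℂ) * (z1 : ℂ))
          - (ν : ℂ) * (z0 + (z1 : ℂ))^2 / (1 - (θ : ℂ) * (z1 : ℂ))^2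
          + ((1/2 - θ + ν : ℝ) : ℂ) * (θ : ℂ) * (z0 + (z1 : ℂ))^3
              / (1 - (θ : ℂ) * (z1 : ℂ))^2)
      atBot
      (nhds ((((1/(θ^2)) * (1/2 - 2*θ + θ^2) : ℝ) : ℂ)
        + (((1/θ) * (1/2 - 2*θ + ν) : ℝ) : ℂ) * z0)) := by
  have hθ₀ : (θ : ℂ) ≠ 0 := by exact_mod_cast hθ.ne'
  set P : ℂ → ℂ := fun q => 1 - ν * q ^ 2 + (1 + θ * z0) * q * (1 + (1/2 - θ + ν) * q)
  have hq : Tendsto (fun t : ℝ => (z0 + t) / (1 - θ * t)) atBot (𝓝 (-(θ : ℂ)⁻¹)) :=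
    (tendsto_div_one_sub_mul_cobounded hθ₀ z0).comp (RCLike.tendsto_ofReal_atBot_cobounded ℂ)
  have hP : P (-(θ : ℂ)⁻¹) = (((1/(θ^2)) * (1/2 - 2*θ + θ^2) : ℝ) : ℂ)
      + (((1/θ) * (1/2 - 2*θ + ν) : ℝ) : ℂ) * z0 := by
    simp only [P]
    push_cast
    field_simp
    ring
  rw [← hP]
  refine ((by fun_prop : Continuous P).tendsto _ |>.comp hq).congr' ?_
  filter_upwards [eventually_lt_atBot (0 : ℝ)] with t ht
  have hden : (1 : ℂ) - θ * t ≠ 0 := by exact_mod_cast (by nlinarith : (1 : ℝ) - θ * t ≠ 0)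
  have h := typeBStability_eq (ν := (ν : ℂ)) (z₀ := z0) hden (div_mul_cancel₀ _ hden).symm
  simp only [typeBStability] at h
  push_cast
  exact h.symm
end

section
/- Let θ ≥ 1/4, s ≥ 1, and let z₁,…,z_s be nonpositive reals. Set z = z₁+⋯+z_s and ϖ = ∏_{j=1}^s(1-θz_j). Then |1 + 2z/ϖ - z/ϖ² + z²/(2ϖ²)| ≤ 1, i.e. |r_A(0,z₁,…,z_s)| ≤ 1. -/
open Finset

lemma aux_one_add_sum_le_prod (F : Finset ℕ) (a : ℕ → ℝ) (ha : ∀ j ∈ F, 0 ≤ a j) :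
    1 + ∑ j ∈ F, a j ≤ ∏ j ∈ F, (1 + a j) := by
  induction F using Finset.cons_induction with
  | empty => simp
  | cons i F hi ih =>
      rw [Finset.sum_cons, Finset.prod_cons]
      have h1 : 0 ≤ a i := ha i (Finset.mem_cons_self _ _)
      have h2 : 1 + ∑ j ∈ F, a j ≤ ∏ j ∈ F, (1 + a j) :=
        ih (fun j hj => ha j (Finset.mem_cons_of_mem hj))
      have h3 : 0 ≤ ∑ j ∈ F, a j := Finset.sum_nonneg (fun j hj => ha j (Finset.mem_cons_of_mem hj))
      nlinarith

/-- for θ ≥ 1/4 and nonpositive real implicit arguments,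
|r_A(0,z₁,…,z_s)| ≤ 1. -/
theorem stmt_14 (θ : ℝ) (hθ : θ ≥ 1/4) (s : ℕ) (hs : 1 ≤ s) (z : ℕ → ℝ)
    (hz : ∀ j, 1 ≤ j → j ≤ s → z j ≤ 0) :
    |1 + 2 * (∑ j ∈ Finset.Icc 1 s, z j) / (∏ j ∈ Finset.Icc 1 s, (1 - θ * z j))
      - (∑ j ∈ Finset.Icc 1 s, z j) / (∏ j ∈ Finset.Icc 1 s, (1 - θ * z j))^2
      + (∑ j ∈ Finset.Icc 1 s, z j)^2
          / (2 * (∏ j ∈ Finset.Icc 1 s, (1 - θ * z j))^2)| ≤ 1 := by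
  set Z := ∑ j ∈ Finset.Icc 1 s, z j with hZdef
  set w := ∏ j ∈ Finset.Icc 1 s, (1 - θ * z j) with hwdef
  have hmem : ∀ j ∈ Finset.Icc 1 s, z j ≤ 0 := by
    intro j hj
    rw [Finset.mem_Icc] at hj
    exact hz j hj.1 hj.2
  have hZ : Z ≤ 0 := Finset.sum_nonpos hmem
  have ha : ∀ j ∈ Finset.Icc 1 s, 0 ≤ -θ * z j := by
    intro j hj
    have := hmem j hj
    nlinarith
  have hw4 : 1 + ∑ j ∈ Finset.Icc 1 s, -θ * z j ≤ w := by
    have := aux_one_add_sum_le_prod (Finset.Icc 1 s) (fun j => -θ * z j) ha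
    simpa [hwdef, sub_eq_add_neg, neg_mul] using this
  have hsum : ∑ j ∈ Finset.Icc 1 s, -θ * z j = -θ * Z := by
    rw [hZdef, Finset.mul_sum]
  rw [hsum] at hw4
  have hw1 : (1:ℝ) ≤ w := by nlinarith
  have hwZ : 1 - Z/4 ≤ w := by nlinarith
  have hw0 : 0 < w := by linarith
  have key : 1 + 2*Z/w - Z/w^2 + Z^2/(2*w^2)
      = (2*w^2 + 4*Z*w - 2*Z + Z^2)/(2*w^2) := by
    field_simp
    ring
  rw [key, abs_div, abs_of_pos (by nlinarith : (0:ℝ) < 2*w^2), div_le_one (by nlinarith : (0:ℝ) < 2*w^2)]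
  rw [abs_le]
  constructor
  · nlinarith [sq_nonneg (2*w + Z)]
  · nlinarith [mul_nonneg (neg_nonneg.mpr hZ) (by linarith : (0:ℝ) ≤ 4*w - 4 + Z)]
end
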